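/- For every integer n ≥ 2, the algebra C₃ has level one: the closure of the GL(V)-orbit of the structure of C₃ equals the union of that orbit with the single point 0 (the zero multiplication). -/

import Mathlib

open Function Submodule

/-! Common framework: `V = ℂ^{n+1}`, `n`-ary multiplications as functions
`(Fin n → V) → V`, the action of `GL(V)` on them, orbits, and the
(n+1)-dimensional n-ary Filippov algebras of Kaygorodov–Volkov, each described
as an alternating `n`-linear map by its values on the increasing tuples of
distinct standard basis vectors (0-indexed: `bt n j` is the tuple omitting `e j`). -/

/-- The underlying space `V = ℂ^{n+1}`. -/
abbrev nV (n : ℕ) : Type := Fin (n + 1) → ℂ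

/-- The `j`-th standard basis vector of `V` (0-indexed). -/
def sb (n : ℕ) (j : Fin (n + 1)) : nV n := Pi.single j 1

/-- The increasing `n`-tuple of standard basis vectors omitting `e j`. -/
def bt (n : ℕ) (j : Fin (n + 1)) : Fin n → nV n := fun k => sb n (j.succAbove k)

/-- The action of `GL(V)` (invertible linear maps) on `n`-ary multiplications:
`(g • μ)(x₁, …, xₙ) = g (μ (g⁻¹ x₁, …, g⁻¹ xₙ))`. -/
noncomputable def glAct (n : ℕ) (g : nV n ≃ₗ[ℂ] nV n) (μ : (Fin n → nV n) → nV n) :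
    (Fin n → nV n) → nV n :=
  fun x => g (μ fun i => g.symm (x i))

/-- The `GL(V)`-orbit of an `n`-ary multiplication. -/
def glOrbit (n : ℕ) (μ : (Fin n → nV n) → nV n) : Set ((Fin n → nV n) → nV n) :=
  {ν | ∃ g : nV n ≃ₗ[ℂ] nV n, ν = glAct n g μ}

/-- The algebra `B`: `[e₂, …, e_{n+1}] = e₁` (0-indexed: the tuple omitting `e 0`
maps to `e 0`), all other increasing basis products zero. -/
def IsB (n : ℕ) (μ : AlternatingMap ℂ (nV n) (nV n) (Fin n)) : Prop :=
  μ (bt n 0) = sb n 0 ∧ ∀ j : Fin (n + 1), j ≠ 0 → μ (bt n j) = 0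

/-- The algebra `C₁`: `[e₂, …, e_{n+1}] = e₁`, `[e₁, e₃, …, e_{n+1}] = e₂`. -/
def IsC1 (n : ℕ) (μ : AlternatingMap ℂ (nV n) (nV n) (Fin n)) : Prop :=
  μ (bt n 0) = sb n 0 ∧ μ (bt n 1) = sb n 1 ∧
    ∀ j : Fin (n + 1), j ≠ 0 → j ≠ 1 → μ (bt n j) = 0

/-- The algebra `C₂(α)`: `[e₂, …, e_{n+1}] = α e₁ + e₂`, `[e₁, e₃, …, e_{n+1}] = e₂`. -/
def IsC2 (n : ℕ) (α : ℂ) (μ : AlternatingMap ℂ (nV n) (nV n) (Fin n)) : Prop :=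
  μ (bt n 0) = α • sb n 0 + sb n 1 ∧ μ (bt n 1) = sb n 1 ∧
    ∀ j : Fin (n + 1), j ≠ 0 → j ≠ 1 → μ (bt n j) = 0

/-- The algebra `C₃`: `[e₁, e₃, …, e_{n+1}] = e₁`, `[e₂, e₃, …, e_{n+1}] = e₂`. -/
def IsC3 (n : ℕ) (μ : AlternatingMap ℂ (nV n) (nV n) (Fin n)) : Prop :=
  μ (bt n 1) = sb n 0 ∧ μ (bt n 0) = sb n 1 ∧
    ∀ j : Fin (n + 1), j ≠ 0 → j ≠ 1 → μ (bt n j) = 0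

/-- The algebra `D_r`: `[e₁, …, e_{i-1}, e_{i+1}, …, e_{n+1}] = e_i` for `1 ≤ i ≤ r`
(0-indexed: the tuple omitting `e j` maps to `e j` for `j < r` and to `0` otherwise). -/
def IsD (n r : ℕ) (μ : AlternatingMap ℂ (nV n) (nV n) (Fin n)) : Prop :=
  ∀ j : Fin (n + 1), ((j : ℕ) < r → μ (bt n j) = sb n j) ∧ (r ≤ (j : ℕ) → μ (bt n j) = 0)

/-! `C₃` is `ν_{e₁,e₂}`, where `ν_{u,v}(x) = det[u, x] v - det[v, x] u` (`wedgeBracket`).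
Since `g • ν_{u,v} = ν_{det(g)⁻¹ g u, g v}`, and a scalar matrix `z` multiplies an `n`-ary map
by `z^(1-n)`, which for `n ≥ 2` takes every nonzero value, the orbit of `C₃` consists of all
nonzero `ν_{u,v}`, and `t • C₃ → 0`. Conversely, the structure constants `W` of every `ν_{u,v}`
satisfy the Plücker relations, a closed condition; an alternating map satisfying them with
`W p q ≠ 0` is `ν_{u,v}` for `u = W q ·` and `v = W p · / W p q`. -/

open Filter Topology

theorem exists_linearIndependent_extend_pair {K V : Type*} [Field K] [AddCommGroup V]
    [Module K V] [FiniteDimensional K V] {u v : V} (huv : LinearIndependent K ![u, v]) :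
    ∀ j, j + 2 ≤ Module.finrank K V →
      ∃ f : Fin (j + 2) → V, LinearIndependent K f ∧ f 0 = u ∧ f 1 = v
  | 0, _ => ⟨![u, v], huv, rfl, rfl⟩
  | j + 1, hj => by
    obtain ⟨f, hf, hf0, hf1⟩ := exists_linearIndependent_extend_pair huv j (by omega)
    obtain ⟨x, hx⟩ := exists_linearIndependent_snoc_of_lt_finrank hf (by omega)
    exact ⟨Fin.snoc f x, hx, by simpa using hf0,
      by rw [← Fin.castSucc_one, Fin.snoc_castSucc, hf1]⟩

theorem AlternatingMap.isClosed_range_coe {𝕜 E F ι : Type*} [NontriviallyNormedField 𝕜]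
    [CompleteSpace 𝕜] [AddCommGroup E] [Module 𝕜 E] [FiniteDimensional 𝕜 E] [AddCommGroup F]
    [Module 𝕜 F] [FiniteDimensional 𝕜 F] [TopologicalSpace F] [IsTopologicalAddGroup F]
    [ContinuousSMul 𝕜 F] [T2Space F] [Fintype ι] :
    IsClosed (Set.range ((⇑) : AlternatingMap 𝕜 E F ι → (ι → E) → F)) := by
  have : FiniteDimensional 𝕜 (AlternatingMap 𝕜 E F ι) :=
    Module.Finite.of_injective (AlternatingMap.toMultilinearMapLM (S := 𝕜))
      AlternatingMap.coe_multilinearMap_injective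
  let coeLM : AlternatingMap 𝕜 E F ι →ₗ[𝕜] (ι → E) → F :=
    { toFun := (⇑), map_add' := fun _ _ => rfl, map_smul' := fun _ _ => rfl }
  exact (LinearMap.range coeLM).closed_of_finiteDimensional

section

variable {n : ℕ}

noncomputable def detCons (n : ℕ) : nV n →ₗ[ℂ] AlternatingMap ℂ (nV n) ℂ (Fin n) :=
  (Pi.basisFun ℂ (Fin (n + 1))).det.curryLeft

theorem detCons_apply (w : nV n) (x : Fin n → nV n) :
    detCons n w x = (Pi.basisFun ℂ (Fin (n + 1))).det (Fin.cons w x) :=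
  AlternatingMap.curryLeft_apply_apply _ _ _

theorem detCons_map (h : nV n →ₗ[ℂ] nV n) (w : nV n) (x : Fin n → nV n) :
    detCons n (h w) (h ∘ x) = LinearMap.det h * detCons n w x := by
  rw [detCons_apply, detCons_apply, ← Fin.comp_cons, Module.Basis.det_comp]

theorem of_cons_bt_eq_submatrix (w : nV n) (j : Fin (n + 1)) :
    Matrix.of (Fin.cons w (bt n j)) = (Matrix.updateRow 1 j w).submatrix j.cycleRange.symm id := by
  ext i r
  refine Fin.cases ?_ (fun k => ?_) i
  · simp
  · simp [Fin.cycleRange_symm_succ, bt, sb, Matrix.one_apply, Pi.single_apply, eq_comm]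

theorem detCons_bt (w : nV n) (j : Fin (n + 1)) :
    detCons n w (bt n j) = (-1) ^ (j : ℕ) * w j := by
  have hw : ∑ k, w k • (1 : Matrix (Fin (n + 1)) (Fin (n + 1)) ℂ) k = w := by
    ext r
    simp [Matrix.one_apply]
  have hrow := Matrix.det_updateRow_sum (1 : Matrix (Fin (n + 1)) (Fin (n + 1)) ℂ) j w
  rw [hw, Matrix.det_one, smul_eq_mul, mul_one] at hrow
  rw [detCons_apply, Pi.basisFun_det_apply, of_cons_bt_eq_submatrix, Matrix.det_permute, hrow,
    Equiv.Perm.sign_symm, Fin.sign_cycleRange]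
  simp

theorem alternatingMap_ext_bt {f g : AlternatingMap ℂ (nV n) (nV n) (Fin n)}
    (h : ∀ j, f (bt n j) = g (bt n j)) : f = g := by
  refine Module.Basis.ext_alternating (Pi.basisFun ℂ (Fin (n + 1))) fun v hv => ?_
  obtain ⟨j, hj⟩ : ∃ j, j ∉ Set.range v := by
    by_contra! hsurj
    simpa using Fintype.card_le_of_surjective v (Set.range_eq_univ.1 (Set.eq_univ_of_forall hsurj))
  choose w hw using fun i => Fin.exists_succAbove_eq (fun hji : v i = j => hj ⟨i, hji⟩)
  have hwinj : Injective w := fun a b hab => hv (by rw [← hw a, ← hw b, hab])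
  let σ : Equiv.Perm (Fin n) := Equiv.ofBijective w (Finite.injective_iff_bijective.1 hwinj)
  have hcomp : (fun i => Pi.basisFun ℂ (Fin (n + 1)) (v i)) = bt n j ∘ σ := by
    ext i : 1
    simp [σ, bt, sb, hw]
  rw [hcomp, AlternatingMap.map_perm, AlternatingMap.map_perm, h j]

noncomputable def wedgeBracket (n : ℕ) (u v : nV n) : AlternatingMap ℂ (nV n) (nV n) (Fin n) :=
  (LinearMap.toSpanSingleton ℂ (nV n) v).compAlternatingMap (detCons n u)
    - (LinearMap.toSpanSingleton ℂ (nV n) u).compAlternatingMap (detCons n v)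

theorem wedgeBracket_apply (u v : nV n) (x : Fin n → nV n) :
    wedgeBracket n u v x = detCons n u x • v - detCons n v x • u := by
  simp [wedgeBracket]

theorem wedgeBracket_bt (u v : nV n) (j r : Fin (n + 1)) :
    wedgeBracket n u v (bt n j) r = (-1) ^ (j : ℕ) * (u j * v r - v j * u r) := by
  simp only [wedgeBracket_apply, detCons_bt, Pi.sub_apply, Pi.smul_apply, smul_eq_mul]
  ring

theorem smul_wedgeBracket (c : ℂ) (u v : nV n) :
    c • wedgeBracket n u v = wedgeBracket n (c • u) v := by
  ext x : 1
  simp only [AlternatingMap.smul_apply, wedgeBracket_apply, map_smul, smul_eq_mul, smul_sub,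
    smul_smul, mul_comm c]

theorem wedgeBracket_self (u : nV n) : wedgeBracket n u u = 0 := by
  ext x : 1
  simp [wedgeBracket_apply]

theorem wedgeBracket_comm (u v : nV n) : wedgeBracket n v u = -wedgeBracket n u v := by
  ext x : 1
  simp [wedgeBracket_apply]

theorem wedgeBracket_eq_zero_of_not_linearIndependent {u v : nV n}
    (h : ¬ LinearIndependent ℂ ![u, v]) : wedgeBracket n u v = 0 := by
  obtain ⟨s, t, hst, hne⟩ : ∃ s t : ℂ, s • u + t • v = 0 ∧ (s ≠ 0 ∨ t ≠ 0) := by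
    simpa [LinearIndependent.pair_iff, or_iff_not_imp_left] using h
  have hs : s • wedgeBracket n u v = 0 := by
    rw [smul_wedgeBracket, eq_neg_of_add_eq_zero_left hst, ← neg_smul, ← smul_wedgeBracket,
      wedgeBracket_self, smul_zero]
  have ht : t • wedgeBracket n u v = 0 := by
    rw [← neg_neg (wedgeBracket n u v), ← wedgeBracket_comm, smul_neg, smul_wedgeBracket,
      eq_neg_of_add_eq_zero_right hst, ← neg_smul, ← smul_wedgeBracket, wedgeBracket_self,
      smul_zero, neg_zero]
  rcases hne with hs0 | ht0
  · exact (smul_eq_zero.1 hs).resolve_left hs0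
  · exact (smul_eq_zero.1 ht).resolve_left ht0

theorem glAct_wedgeBracket (g : nV n ≃ₗ[ℂ] nV n) (u v : nV n) :
    glAct n g (wedgeBracket n u v)
      = wedgeBracket n ((LinearMap.det (g : nV n →ₗ[ℂ] nV n))⁻¹ • g u) (g v) := by
  have hdet (w : nV n) (x : Fin n → nV n) : detCons n w (g.symm ∘ x)
      = (LinearMap.det (g : nV n →ₗ[ℂ] nV n))⁻¹ * detCons n (g w) x := by
    simpa [LinearEquiv.det_coe_symm] using detCons_map (g.symm : nV n →ₗ[ℂ] nV n) (g w) x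
  ext x : 1
  simp only [glAct, wedgeBracket_apply]
  rw [show (fun i => g.symm (x i)) = g.symm ∘ x from rfl, hdet, hdet, map_sub, map_smul, map_smul]
  simp [smul_smul, mul_comm]

theorem eq_wedgeBracket_of_isC3 (hn : 1 ≤ n) {μ : AlternatingMap ℂ (nV n) (nV n) (Fin n)}
    (hμ : IsC3 n μ) : μ = wedgeBracket n (sb n 0) (sb n 1) := by
  obtain ⟨m, rfl⟩ : ∃ m, n = m + 1 := ⟨n - 1, by omega⟩
  obtain ⟨h1, h0, hrest⟩ := hμ
  have h01 : (0 : Fin (m + 2)) ≠ 1 := by simp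
  refine alternatingMap_ext_bt fun j => ?_
  ext r : 1
  rw [wedgeBracket_bt]
  by_cases hj0 : j = 0
  · subst hj0
    simp [h0, sb, Pi.single_apply, h01]
  by_cases hj1 : j = 1
  · subst hj1
    by_cases hr : r = 0 <;> simp [h1, sb, Pi.single_apply, hr]
  · simp [hrest j hj0 hj1, sb, hj0, hj1]

theorem glAct_glAct (g h : nV n ≃ₗ[ℂ] nV n) (μ : (Fin n → nV n) → nV n) :
    glAct n g (glAct n h μ) = glAct n (h.trans g) μ :=
  rfl

theorem glAct_smulOfNeZero (μ : MultilinearMap ℂ (fun _ : Fin n => nV n) (nV n)) {a : ℂ}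
    (ha : a ≠ 0) :
    glAct n (LinearEquiv.smulOfNeZero ℂ (nV n) a ha) μ = (a * a⁻¹ ^ n) • ⇑μ := by
  ext x : 1
  have hsymm : ∀ y, (LinearEquiv.smulOfNeZero ℂ (nV n) a ha).symm y = a⁻¹ • y := fun _ => rfl
  simp [glAct, hsymm, MultilinearMap.map_smul_univ, smul_smul, mul_comm a]

theorem smul_mem_glOrbit (hn : 2 ≤ n) (μ : MultilinearMap ℂ (fun _ : Fin n => nV n) (nV n))
    {c : ℂ} (hc : c ≠ 0) {ν : (Fin n → nV n) → nV n} (hν : ν ∈ glOrbit n μ) :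
    c • ν ∈ glOrbit n μ := by
  obtain ⟨g, rfl⟩ := hν
  obtain ⟨z, hz⟩ := IsAlgClosed.exists_pow_nat_eq c (by omega : 0 < n - 1)
  have hz0 : z ≠ 0 := by rintro rfl; exact hc (by simp [← hz, zero_pow (by omega : n - 1 ≠ 0)])
  have hscalar : z⁻¹ * z⁻¹⁻¹ ^ n = c := by
    rw [inv_inv, ← hz, ← pow_sub_one_mul (by omega : n ≠ 0), mul_comm, mul_assoc,
      mul_inv_cancel₀ hz0, mul_one]
  refine ⟨(LinearEquiv.smulOfNeZero ℂ (nV n) z⁻¹ (inv_ne_zero hz0)).trans g, ?_⟩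
  rw [← glAct_glAct, glAct_smulOfNeZero, hscalar]
  ext x : 1
  simp [glAct]

theorem exists_linearEquiv_sb_eq (hn : 1 ≤ n) {u v : nV n}
    (huv : LinearIndependent ℂ ![u, v]) :
    ∃ g : nV n ≃ₗ[ℂ] nV n, g (sb n 0) = u ∧ g (sb n 1) = v := by
  obtain ⟨m, rfl⟩ : ∃ m, n = m + 1 := ⟨n - 1, by omega⟩
  obtain ⟨f, hf, hf0, hf1⟩ := exists_linearIndependent_extend_pair huv m (by simp)
  let b := basisOfLinearIndependentOfCardEqFinrank hf (by simp)
  refine ⟨(Pi.basisFun ℂ (Fin (m + 2))).equiv b (Equiv.refl _), ?_, ?_⟩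
  · simp [sb, ← Pi.basisFun_apply, b, hf0]
  · simp [sb, ← Pi.basisFun_apply, b, hf1]

theorem wedgeBracket_mem_glOrbit (hn : 2 ≤ n) {μ : AlternatingMap ℂ (nV n) (nV n) (Fin n)}
    (hμ : IsC3 n μ) {u v : nV n} (h : wedgeBracket n u v ≠ 0) :
    ⇑(wedgeBracket n u v) ∈ glOrbit n μ := by
  have huv : LinearIndependent ℂ ![u, v] :=
    by_contra fun hdep => h (wedgeBracket_eq_zero_of_not_linearIndependent hdep)
  obtain ⟨g, hg0, hg1⟩ := exists_linearEquiv_sb_eq (by omega) huv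
  set d := LinearMap.det (g : nV n →ₗ[ℂ] nV n)
  have hd : d ≠ 0 := (LinearEquiv.isUnit_det' g).ne_zero
  have hg : glAct n g μ = d⁻¹ • ⇑(wedgeBracket n u v) := by
    rw [eq_wedgeBracket_of_isC3 (by omega) hμ, glAct_wedgeBracket, hg0, hg1,
      ← smul_wedgeBracket]
    rfl
  have := smul_mem_glOrbit hn μ.toMultilinearMap hd ⟨g, rfl⟩
  rw [AlternatingMap.coe_multilinearMap] at this
  rwa [hg, smul_smul, mul_inv_cancel₀ hd, one_smul] at this

theorem zero_mem_closure_glOrbit (hn : 2 ≤ n)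
    (μ : MultilinearMap ℂ (fun _ : Fin n => nV n) (nV n)) :
    (0 : (Fin n → nV n) → nV n) ∈ closure (glOrbit n μ) := by
  have hcont : Continuous fun c : ℂ => c • ⇑μ := continuous_id.smul continuous_const
  have hlim : Tendsto (fun c : ℂ => c • ⇑μ) (𝓝[≠] 0) (𝓝 0) := by
    simpa using (hcont.tendsto 0).mono_left nhdsWithin_le_nhds
  refine mem_closure_of_tendsto hlim (eventually_nhdsWithin_of_forall fun c hc => ?_)
  exact smul_mem_glOrbit hn μ hc ⟨LinearEquiv.refl ℂ (nV n), rfl⟩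

def structCoeff (ν : (Fin n → nV n) → nV n) (r c : Fin (n + 1)) : ℂ :=
  (-1) ^ (c : ℕ) * ν (bt n c) r

theorem apply_bt_eq_structCoeff (ν : (Fin n → nV n) → nV n) (r c : Fin (n + 1)) :
    ν (bt n c) r = (-1) ^ (c : ℕ) * structCoeff ν r c := by
  rw [structCoeff, ← mul_assoc, ← mul_pow]
  norm_num

theorem structCoeff_wedgeBracket (u v : nV n) (r c : Fin (n + 1)) :
    structCoeff (wedgeBracket n u v) r c = u c * v r - v c * u r := by
  rw [structCoeff, wedgeBracket_bt, ← mul_assoc, ← mul_pow]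
  norm_num

@[fun_prop]
theorem continuous_structCoeff (r c : Fin (n + 1)) :
    Continuous fun ν : (Fin n → nV n) → nV n => structCoeff ν r c :=
  continuous_const.mul ((continuous_apply r).comp (continuous_apply (bt n c)))

/-- The Plücker relations: among alternating maps they cut out those whose structure constants
form a decomposable bivector, i.e. the maps `wedgeBracket n u v`. -/
def pluckerLocus (n : ℕ) : Set ((Fin n → nV n) → nV n) :=
  Set.range ((⇑) : AlternatingMap ℂ (nV n) (nV n) (Fin n) → (Fin n → nV n) → nV n) ∩
    {ν | ∀ p q s t, structCoeff ν p q * structCoeff ν s t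
      = structCoeff ν p s * structCoeff ν q t - structCoeff ν p t * structCoeff ν q s}

theorem isClosed_pluckerLocus (n : ℕ) : IsClosed (pluckerLocus n) := by
  refine AlternatingMap.isClosed_range_coe.inter ?_
  simp only [Set.ofPred_forall]
  refine isClosed_iInter fun p => isClosed_iInter fun q => isClosed_iInter fun s =>
    isClosed_iInter fun t => isClosed_eq ?_ ?_ <;> fun_prop

theorem wedgeBracket_mem_pluckerLocus (u v : nV n) : ⇑(wedgeBracket n u v) ∈ pluckerLocus n :=
  ⟨⟨_, rfl⟩, fun p q s t => by simp only [structCoeff_wedgeBracket]; ring⟩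

theorem exists_eq_wedgeBracket_of_mem_pluckerLocus {ν : (Fin n → nV n) → nV n}
    (hν : ν ∈ pluckerLocus n) : ∃ u v, ν = wedgeBracket n u v := by
  obtain ⟨⟨N, rfl⟩, hpl⟩ := hν
  by_cases h : ∃ p q, structCoeff N p q ≠ 0
  · obtain ⟨p, q, hpq⟩ := h
    refine ⟨fun t => structCoeff N q t, fun s => structCoeff N p s / structCoeff N p q,
      congrArg _ (alternatingMap_ext_bt fun c => ?_)⟩
    ext r : 1
    rw [wedgeBracket_bt, apply_bt_eq_structCoeff ⇑N]
    field_simp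
    linear_combination hpl p q r c
  · push Not at h
    refine ⟨0, 0, congrArg _ (alternatingMap_ext_bt fun c => ?_)⟩
    ext r : 1
    rw [apply_bt_eq_structCoeff ⇑N, h, wedgeBracket_self]
    simp

theorem glOrbit_subset_pluckerLocus (hn : 1 ≤ n) {μ : AlternatingMap ℂ (nV n) (nV n) (Fin n)}
    (hμ : IsC3 n μ) : glOrbit n μ ⊆ pluckerLocus n := by
  rintro _ ⟨g, rfl⟩
  rw [eq_wedgeBracket_of_isC3 hn hμ, glAct_wedgeBracket]
  exact wedgeBracket_mem_pluckerLocus _ _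

end

/-- For every integer `n ≥ 2`, the algebra `C₃` has level one: the closure of
the `GL(V)`-orbit of the structure of `C₃` is the union of that orbit with the single point
`0` (the zero multiplication). -/
theorem C3_has_level_one (n : ℕ) (hn : 2 ≤ n)
    (μ : AlternatingMap ℂ (nV n) (nV n) (Fin n)) (hμ : IsC3 n μ) :
    closure (glOrbit n ⇑μ) = glOrbit n ⇑μ ∪ {(0 : (Fin n → nV n) → nV n)} := by
  refine subset_antisymm (fun ν hν => ?_) (Set.union_subset subset_closure ?_)
  · obtain ⟨u, v, rfl⟩ := exists_eq_wedgeBracket_of_mem_pluckerLocus <|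
      closure_minimal (glOrbit_subset_pluckerLocus (by omega) hμ) (isClosed_pluckerLocus n) hν
    by_cases h : wedgeBracket n u v = 0
    · exact Or.inr (by rw [h]; rfl)
    · exact Or.inl (wedgeBracket_mem_glOrbit hn hμ h)
  · simpa using zero_mem_closure_glOrbit hn μ.toMultilinearMap
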